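/- arXiv:1810.08047 — 4 statements merged into one kernel-verified Lean document; each statement's English description precedes it below -/
import Mathlib

section
/- The average regret ratio arr(·) is a supermodular set function: for all sets S ⊆ T ⊆ D and every point p ∈ D \ T, arr(S ∪ {p}) − arr(S) ≤ arr(T ∪ {p}) − arr(T). -/
/-- Satisfaction of a utility function `f` with respect to a set `S`:
the maximum of `f` over `S`, with the convention `sat ∅ f = 0`. -/
noncomputable def sat {D : Type*} (S : Finset D) (f : D → ℝ) : ℝ :=
  if h : S.Nonempty then S.sup' h f else 0

/-- Regret ratio of `f` with respect to `S`, where the database is the whole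
finite type `D`. -/
noncomputable def rr {D : Type*} [Fintype D] (S : Finset D) (f : D → ℝ) : ℝ :=
  (sat Finset.univ f - sat S f) / sat Finset.univ f

/-- Average regret ratio of `S` over a finite set of users `ι` with utility
functions `f i` and weights `η i`. -/
noncomputable def arr {D ι : Type*} [Fintype D] [Fintype ι]
    (η : ι → ℝ) (f : ι → D → ℝ) (S : Finset D) : ℝ :=
  ∑ i : ι, η i * rr S (f i)

lemma sat_mono {D : Type*} {S T : Finset D} (f : D → ℝ) (hf : ∀ p, 0 ≤ f p)
    (hST : S ⊆ T) : sat S f ≤ sat T f := by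
  unfold sat
  by_cases hS : S.Nonempty
  · have hT : T.Nonempty := hS.mono hST
    rw [dif_pos hS, dif_pos hT]
    exact Finset.sup'_mono f hST hS
  · rw [dif_neg hS]
    by_cases hT : T.Nonempty
    · rw [dif_pos hT]
      obtain ⟨x, hx⟩ := hT
      exact le_trans (hf x) (Finset.le_sup' f hx)
    · rw [dif_neg hT]

lemma sat_union_singleton {D : Type*} [DecidableEq D] (S : Finset D) (p : D)
    (f : D → ℝ) (hf : ∀ q, 0 ≤ f q) :
    sat (S ∪ {p}) f = max (sat S f) (f p) := by
  unfold sat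
  by_cases hS : S.Nonempty
  · have h : (S ∪ {p}).Nonempty := hS.mono Finset.subset_union_left
    rw [dif_pos h, dif_pos hS, Finset.sup'_union hS ⟨p, Finset.mem_singleton_self p⟩ f,
      Finset.sup'_singleton]
  · rw [Finset.not_nonempty_iff_eq_empty] at hS
    subst hS
    simp [dif_neg, max_eq_right (hf p)]

/-- The average regret ratio is a supermodular set function. -/
theorem arr_supermodular {D ι : Type*} [Fintype D] [DecidableEq D] [Nonempty D] [Fintype ι]
    (η : ι → ℝ) (f : ι → D → ℝ)
    (hf : ∀ (i : ι) (p : D), 0 ≤ f i p)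
    (hη : ∀ i : ι, 0 ≤ η i)
    (hηsum : ∑ i : ι, η i = 1)
    (hD : ∀ i : ι, 0 < sat (Finset.univ : Finset D) (f i))
    (S T : Finset D) (hST : S ⊆ T) (p : D) (hp : p ∉ T) :
    arr η f (S ∪ {p}) - arr η f S ≤ arr η f (T ∪ {p}) - arr η f T := by
  unfold arr
  rw [← Finset.sum_sub_distrib, ← Finset.sum_sub_distrib]
  apply Finset.sum_le_sum
  intro i _
  rw [← mul_sub, ← mul_sub]
  apply mul_le_mul_of_nonneg_left _ (hη i)
  unfold rr
  rw [div_sub_div_same, div_sub_div_same]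
  apply div_le_div_of_nonneg_right _ (hD i).le
  rw [sat_union_singleton S p (f i) (hf i), sat_union_singleton T p (f i) (hf i)]
  have hm := sat_mono (f i) (hf i) hST
  rcases le_total (f i p) (sat S (f i)) with h | h
  · rw [max_eq_left h, max_eq_left (h.trans hm)]
    linarith
  · rw [max_eq_right h]
    rcases le_total (f i p) (sat T (f i)) with h2 | h2
    · rw [max_eq_left h2]; linarith
    · rw [max_eq_right h2]; linarith
end

section
/- Let U be a nonempty finite set and g : Finset U → ℝ a nonnegative, monotonically decreasing, supermodular set function. For x ∈ X ⊆ U put d(x, X) = g(X \ {x}) − g(X), and let the steepness s be the maximum of (d(x, {x}) − d(x, U)) / d(x, {x}) over all x ∈ U with d(x, {x}) > 0; assume 0 < s < 1 and set t = s/(1 − s). Let 1 ≤ k ≤ |U| and let S_0, S_1, …, S_{|U|−k} be a greedy shrinking sequence: S_0 = U and for each j, S_{j+1} = S_j \ {x_j} where x_j ∈ S_j satisfies g(S_j \ {x_j}) ≤ g(S_j \ {x}) for all x ∈ S_j. Then the greedy output S = S_{|U|−k} satisfies g(S) ≤ ((e^t − 1)/t) · min_{T ⊆ U, |T| = k} g(T).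 -/
/-!
Fix an optimal `k`-set `T` and follow the greedy run. For the current set `X` let
`E = g (X ∩ T) - g X` and `a = |X \ T|`. Removing all of `X \ T` costs at most `E` by
supermodularity, and each single removal costs at least the greedy loss `δ`, so `a δ ≤ E`.
If the greedy element lies in `T`, steepness (`d(x,{x}) ≤ (1 + t) d(x,U)`) lets `E` grow by
at most `t δ` while `a` stays; otherwise `a` drops by one and `E` by `δ`. In both cases the
loss of the remaining `ℓ` steps is at most `(E / t) ((1 + t / a) ^ ℓ - 1)`. At the start
`a = ℓ = |U| - k`, and `(1 + t / ℓ) ^ ℓ ≤ e ^ t`.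
-/

open Finset

/-- AM–GM for `n` copies of `x` and one copy of `1`. -/
theorem pow_le_mean_pow_succ {x : ℝ} (hx : 0 < x) (n : ℕ) :
    x ^ n ≤ ((n * x + 1) / (n + 1)) ^ (n + 1) := by
  set b := (n * x + 1) / (n + 1)
  have hb : 0 ≤ b := by positivity
  have hbern := one_add_mul_le_pow (a := b / x - 1) (by linarith [div_nonneg hb hx.le]) (n + 1)
  have hlhs : 1 + ((n + 1 : ℕ) : ℝ) * (b / x - 1) = 1 / x := by
    simp only [b]; push_cast; field_simp; ring
  rw [hlhs, add_sub_cancel, div_pow, div_le_div_iff₀ hx (by positivity), pow_succ] at hbern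
  nlinarith

theorem one_add_div_pow_le_pow_succ {t a : ℝ} {n : ℕ} (ht : 0 ≤ t) (hn : (n : ℝ) ≤ a) :
    (1 + t / a) ^ n ≤ (1 + t / (a + 1)) ^ (n + 1) := by
  rcases Nat.eq_zero_or_pos n with rfl | hn0
  · have : 0 ≤ t / (a + 1) := div_nonneg ht (by linarith)
    simpa using this
  have ha : 0 < a := lt_of_lt_of_le (by exact_mod_cast hn0) hn
  have hmean : (n * (1 + t / a) + 1) / (n + 1) ≤ 1 + t / (a + 1) := by
    rw [div_le_iff₀ (by positivity)]
    field_simp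
    nlinarith
  calc (1 + t / a) ^ n ≤ ((n * (1 + t / a) + 1) / (n + 1)) ^ (n + 1) :=
        pow_le_mean_pow_succ (by positivity) n
    _ ≤ (1 + t / (a + 1)) ^ (n + 1) := pow_le_pow_left₀ (by positivity) hmean _

theorem mul_one_add_div_pow_sub_one_add_le {t a : ℝ} {n : ℕ} (ht : 0 ≤ t)
    (hn : (n : ℝ) ≤ a) :
    a * ((1 + t / a) ^ n - 1) + t ≤ (a + 1) * ((1 + t / (a + 1)) ^ (n + 1) - 1) := by
  induction n with
  | zero =>
    have ha1 : a + 1 ≠ 0 := by simp at hn; positivity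
    simp [mul_div_cancel₀ t ha1]
  | succ n ih =>
    push_cast at hn
    have ha : 0 < a := by linarith [(n.cast_nonneg : (0 : ℝ) ≤ n)]
    have ha1 : 0 < a + 1 := by linarith
    have hx : a * ((1 + t / a) ^ (n + 1) - 1) =
        a * ((1 + t / a) ^ n - 1) + t * (1 + t / a) ^ n := by
      rw [pow_succ]; field_simp; ring
    have hy : (a + 1) * ((1 + t / (a + 1)) ^ (n + 1 + 1) - 1) =
        (a + 1) * ((1 + t / (a + 1)) ^ (n + 1) - 1) + t * (1 + t / (a + 1)) ^ (n + 1) := by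
      rw [pow_succ _ (n + 1)]; field_simp; ring
    rw [hx, hy]
    have hshift := one_add_div_pow_le_pow_succ (a := a) (n := n) ht (by linarith)
    nlinarith [ih (by linarith)]

theorem le_one_add_div_one_sub_mul {a b s : ℝ} (hb : 0 ≤ b) (hs : s < 1)
    (h : 0 < a → (a - b) / a ≤ s) : a ≤ (1 + s / (1 - s)) * b := by
  have hs' : 0 < 1 - s := by linarith
  rw [show 1 + s / (1 - s) = (1 - s)⁻¹ by field_simp; ring, inv_mul_eq_div, le_div_iff₀ hs']
  rcases le_or_gt a 0 with ha | ha
  · nlinarith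
  · have := h ha
    rw [div_le_iff₀ ha] at this
    linarith

noncomputable def shrinkBound (t E a : ℝ) (ℓ : ℕ) : ℝ := E / t * ((1 + t / a) ^ ℓ - 1)

theorem add_shrinkBound_le_shrinkBound_succ {t E E' a δ : ℝ} {ℓ : ℕ} (ht : 0 < t)
    (ha : 0 < a) (hgain : a * δ ≤ E) (hE : E' ≤ E + t * δ) :
    δ + shrinkBound t E' a ℓ ≤ shrinkBound t E a (ℓ + 1) := by
  have hP : 1 ≤ (1 + t / a) ^ ℓ := one_le_pow₀ (by simp; positivity)
  unfold shrinkBound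
  rw [pow_succ]
  set P := (1 + t / a) ^ ℓ
  field_simp
  nlinarith [mul_le_mul_of_nonneg_left hE (by nlinarith : 0 ≤ a * (P - 1)),
    mul_le_mul_of_nonneg_left hgain (by positivity : 0 ≤ t * P)]

theorem add_shrinkBound_sub_le_shrinkBound_succ {t E a δ : ℝ} {ℓ : ℕ} (ht : 0 < t)
    (ha : (ℓ : ℝ) ≤ a) (hδ : 0 ≤ δ) (hgain : (a + 1) * δ ≤ E) :
    δ + shrinkBound t (E - δ) a ℓ ≤ shrinkBound t E (a + 1) (ℓ + 1) := by
  have hQR := one_add_div_pow_le_pow_succ ht.le ha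
  have hL := mul_one_add_div_pow_sub_one_add_le ht.le ha
  have ha0 : 0 ≤ a := le_trans ℓ.cast_nonneg ha
  have hE : 0 ≤ E := by nlinarith
  unfold shrinkBound
  set Q := (1 + t / a) ^ ℓ
  set R := (1 + t / (a + 1)) ^ (ℓ + 1)
  suffices t * δ + (E - δ) * (Q - 1) ≤ E * (R - 1) by
    field_simp; linarith
  -- the left side is affine in `δ` with slope `t - (Q - 1)`: use `δ ≤ E / (a + 1)` or `0 ≤ δ`
  rcases le_total (Q - 1) t with hQ | hQ
  · have : (a + 1) * (t * δ + (E - δ) * (Q - 1)) ≤ (a + 1) * (E * (R - 1)) := by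
      nlinarith [mul_le_mul_of_nonneg_right hgain (sub_nonneg.2 hQ),
        mul_le_mul_of_nonneg_left hL hE]
    exact le_of_mul_le_mul_left this (by linarith)
  · nlinarith [mul_nonneg hδ (sub_nonneg.2 hQ), mul_le_mul_of_nonneg_left hQR hE]

theorem one_add_div_pow_le_exp {t : ℝ} (ht : 0 ≤ t) (n : ℕ) :
    (1 + t / n) ^ n ≤ Real.exp t := by
  rcases eq_or_ne n 0 with rfl | hn
  · simpa using Real.one_le_exp ht
  calc (1 + t / n) ^ n ≤ Real.exp (t / n) ^ n :=
        pow_le_pow_left₀ (by positivity) (by linarith [Real.add_one_le_exp (t / n)]) n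
    _ = Real.exp t := by rw [← Real.exp_nat_mul, mul_div_cancel₀ _ (by exact_mod_cast hn)]

theorem add_shrinkBound_le {t u v : ℝ} (ht : 0 < t) (hu : 0 ≤ u) (huv : u ≤ v) (n : ℕ) :
    u + shrinkBound t (v - u) n n ≤ (Real.exp t - 1) / t * v := by
  have hX := one_add_div_pow_le_exp ht.le n
  have hexp := Real.add_one_le_exp t
  unfold shrinkBound
  set X := (1 + t / n) ^ n
  suffices t * u + (v - u) * (X - 1) ≤ (Real.exp t - 1) * v by
    field_simp; linarith
  rcases le_total (X - 1) t with hXt | hXt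
  · nlinarith [mul_le_mul_of_nonneg_right huv (sub_nonneg.2 hXt)]
  · nlinarith [mul_nonneg hu (sub_nonneg.2 hXt)]

section SetFunction

variable {α : Type*} [DecidableEq α] {g : Finset α → ℝ}

def IsSupermodular (g : Finset α → ℝ) : Prop :=
  ∀ A B : Finset α, A ⊆ B → ∀ x, x ∉ B → g (insert x A) - g A ≤ g (insert x B) - g B

def gap (g : Finset α → ℝ) (T X : Finset α) : ℝ := g (X ∩ T) - g X

theorem erase_sub_le_erase_sub_of_subset (hsuper : IsSupermodular g)
    {X Y : Finset α} {y : α} (hYX : Y ⊆ X) (hy : y ∈ Y) :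
    g (X.erase y) - g X ≤ g (Y.erase y) - g Y := by
  have h := hsuper (Y.erase y) (X.erase y) (erase_subset_erase y hYX) y (notMem_erase y X)
  rw [insert_erase hy, insert_erase (hYX hy)] at h
  linarith

theorem sum_erase_sub_le_sdiff_sub (hsuper : IsSupermodular g) {B X : Finset α} (hBX : B ⊆ X) :
    ∑ y ∈ B, (g (X.erase y) - g X) ≤ g (X \ B) - g X := by
  induction B using Finset.induction_on generalizing X with
  | empty => simp
  | @insert a B ha ih =>
    obtain ⟨haX, hBX⟩ := insert_subset_iff.1 hBX
    have hB : B ⊆ X.erase a := fun y hy => mem_erase.2 ⟨fun h => ha (h ▸ hy), hBX hy⟩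
    have hterm : ∑ y ∈ B, (g (X.erase y) - g X)
        ≤ ∑ y ∈ B, (g ((X.erase a).erase y) - g (X.erase a)) :=
      sum_le_sum fun y hy => erase_sub_le_erase_sub_of_subset hsuper (erase_subset a X) (hB hy)
    have hrest := ih hB
    rw [erase_sdiff_comm, ← sdiff_insert] at hrest
    rw [sum_insert ha]
    linarith

theorem card_sdiff_mul_le_gap_of_greedy (hsuper : IsSupermodular g) {X : Finset α} {x : α}
    (hx : ∀ y ∈ X, g (X.erase x) ≤ g (X.erase y)) (T : Finset α) :
    #(X \ T) * (g (X.erase x) - g X) ≤ gap g T X := by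
  calc #(X \ T) * (g (X.erase x) - g X)
      ≤ ∑ y ∈ X \ T, (g (X.erase y) - g X) := by
        rw [← nsmul_eq_mul]
        exact card_nsmul_le_sum _ _ _ fun y hy => by linarith [hx y (mem_sdiff.1 hy).1]
    _ ≤ g (X \ (X \ T)) - g X := sum_erase_sub_le_sdiff_sub hsuper sdiff_subset
    _ = gap g T X := by rw [sdiff_sdiff_self_left, gap]

theorem gap_erase_of_notMem {T X : Finset α} {x : α} (hx : x ∉ T) :
    gap g T (X.erase x) = gap g T X - (g (X.erase x) - g X) := by
  rw [gap, gap, erase_inter, erase_eq_of_notMem fun h => hx (mem_inter.1 h).2]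
  ring

theorem gap_erase_le_of_mem [Fintype α] (hsuper : IsSupermodular g) {t : ℝ} (ht : 0 ≤ t)
    {T X : Finset α} {x : α} (hsteep : g ∅ - g {x} ≤ (1 + t) * (g (univ.erase x) - g univ))
    (hxX : x ∈ X) (hxT : x ∈ T) :
    gap g T (X.erase x) ≤ gap g T X + t * (g (X.erase x) - g X) := by
  have hsmall := erase_sub_le_erase_sub_of_subset hsuper
    (singleton_subset_iff.2 (mem_inter.2 ⟨hxX, hxT⟩)) (mem_singleton_self x)
  have hlarge := erase_sub_le_erase_sub_of_subset hsuper (subset_univ X) hxX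
  rw [erase_singleton] at hsmall
  rw [gap, gap, erase_inter]
  nlinarith

theorem le_add_shrinkBound_of_greedy [Fintype α]
    (hsuper : IsSupermodular g) (hanti : Antitone g) {t : ℝ} (ht : 0 < t)
    (hsteep : ∀ x, g ∅ - g {x} ≤ (1 + t) * (g (univ.erase x) - g univ))
    {S : ℕ → Finset α} {m : ℕ}
    (hS : ∀ j < m, ∃ x ∈ S j,
      S (j + 1) = (S j).erase x ∧ ∀ y ∈ S j, g ((S j).erase x) ≤ g ((S j).erase y))
    (T : Finset α) (ℓ j : ℕ) (hj : j + ℓ = m) (hℓ : ℓ ≤ #(S j \ T)) :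
    g (S m) ≤ g (S j) + shrinkBound t (gap g T (S j)) #(S j \ T) ℓ := by
  induction ℓ generalizing j with
  | zero => simp [← hj, shrinkBound]
  | succ ℓ ih =>
    obtain ⟨x, hxS, hnext, hgreedy⟩ := hS j (by omega)
    have hgain := card_sdiff_mul_le_gap_of_greedy hsuper hgreedy T
    have hδ : 0 ≤ g ((S j).erase x) - g (S j) := sub_nonneg.2 (hanti (erase_subset x _))
    have hrest := ih (j + 1) (by omega)
    rw [hnext, erase_sdiff_comm] at hrest
    by_cases hxT : x ∈ T
    · rw [erase_eq_of_notMem fun h => (mem_sdiff.1 h).2 hxT] at hrest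
      have hpos : (0 : ℝ) < #(S j \ T) := by exact_mod_cast (by omega : 0 < #(S j \ T))
      have hstep := add_shrinkBound_le_shrinkBound_succ (ℓ := ℓ) ht hpos hgain
        (gap_erase_le_of_mem hsuper ht.le (hsteep x) hxS hxT)
      linarith [hrest (by omega)]
    · have hxd : x ∈ S j \ T := mem_sdiff.2 ⟨hxS, hxT⟩
      rw [gap_erase_of_notMem hxT] at hrest
      rw [← card_erase_add_one hxd] at hgain hℓ ⊢
      push_cast at hgain ⊢
      have hstep := add_shrinkBound_sub_le_shrinkBound_succ ht
        (by exact_mod_cast (by omega : ℓ ≤ #((S j \ T).erase x))) hδ hgain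
      linarith [hrest (by omega)]

end SetFunction

/-- Greedy shrinking approximation guarantee for minimizing a nonnegative,
monotonically decreasing, supermodular set function with steepness `s`. -/
theorem greedy_shrink_approx {U : Type*} [Fintype U] [DecidableEq U]
    (g : Finset U → ℝ)
    (hg_nonneg : ∀ A : Finset U, 0 ≤ g A)
    (hg_mono : ∀ (A : Finset U) (x : U), x ∉ A → g (insert x A) ≤ g A)
    (hg_super : ∀ (A B : Finset U), A ⊆ B → ∀ x : U, x ∉ B →
      g (insert x A) - g A ≤ g (insert x B) - g B)
    (d : U → Finset U → ℝ)
    (hd : ∀ (x : U) (X : Finset U), d x X = g (X.erase x) - g X)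
    (s : ℝ)
    (hne : (Finset.univ.filter (fun x : U => 0 < d x {x})).Nonempty)
    (hs_def : s = (Finset.univ.filter (fun x : U => 0 < d x {x})).sup' hne
      (fun x => (d x {x} - d x Finset.univ) / d x {x}))
    (hs0 : 0 < s) (hs1 : s < 1)
    (t : ℝ) (ht : t = s / (1 - s))
    (k : ℕ) (hk2 : k ≤ Fintype.card U)
    (S : ℕ → Finset U)
    (hS0 : S 0 = Finset.univ)
    (hSstep : ∀ j < Fintype.card U - k, ∃ x ∈ S j,
      S (j + 1) = (S j).erase x ∧ ∀ y ∈ S j, g ((S j).erase x) ≤ g ((S j).erase y)) :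
    g (S (Fintype.card U - k))
      ≤ ((Real.exp t - 1) / t) *
        ((Finset.univ.powersetCard k).inf'
          (Finset.powersetCard_nonempty.mpr (by simpa using hk2)) g) := by
  have ht0 : 0 < t := by rw [ht]; exact div_pos hs0 (by linarith)
  have hanti : Antitone g := antitone_iff_forall_insert_le.2 fun A x hx => hg_mono A x hx
  have hsteep : ∀ x, g ∅ - g {x} ≤ (1 + t) * (g (univ.erase x) - g univ) := fun x => by
    have := le_one_add_div_one_sub_mul (a := d x {x}) (b := d x univ)
      (by rw [hd]; exact sub_nonneg.2 (hanti (erase_subset x _))) hs1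
      fun hx => hs_def ▸ le_sup' (fun x => (d x {x} - d x univ) / d x {x})
        (mem_filter.2 ⟨mem_univ x, hx⟩)
    rwa [hd, hd, erase_singleton, ← ht] at this
  obtain ⟨T, hT, hTmin⟩ := exists_mem_eq_inf'
    (powersetCard_nonempty.mpr (by simpa using hk2) : (univ.powersetCard k).Nonempty) g
  have hcard : #(univ \ T) = Fintype.card U - k := by
    rw [← compl_eq_univ_sdiff, card_compl, mem_powersetCard_univ.1 hT]
  have hbound := le_add_shrinkBound_of_greedy hg_super hanti ht0 hsteep hSstep T _ 0
    (zero_add _) (by rw [hS0, hcard])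
  rw [hS0, gap, univ_inter, hcard] at hbound
  rw [hTmin]
  exact hbound.trans (add_shrinkBound_le ht0 (hg_nonneg _) (hanti (subset_univ T)) _)
end

section
/- Let U be a nonempty finite set and T a finite collection of subsets of U such that every element of U belongs to at least one member of T. Take the database D = T, and for each u ∈ U define the utility function f_u : T → ℝ by f_u(t) = 1 if u ∈ t and f_u(t) = 0 otherwise, with the uniform weight η(f_u) = 1/|U|. Then for every nonempty S ⊆ T, the average regret ratio arr(S) = (1/|U|)·Σ_{u ∈ U} (1 − max_{t ∈ S} f_u(t)) equals 0 if and only if S is a set cover of U, i.e., every u ∈ U belongs to some t ∈ S. -/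
open Finset

lemma sat_indicator_le_one {U : Type*} [DecidableEq U] (S : Finset (Finset U))
    (u : U) : sat S (fun t => if u ∈ t then (1 : ℝ) else 0) ≤ 1 := by
  unfold sat
  split
  · apply Finset.sup'_le
    intro t _
    split <;> norm_num
  · norm_num

lemma sat_indicator_eq_one_iff {U : Type*} [DecidableEq U] (S : Finset (Finset U))
    (hSne : S.Nonempty) (u : U) :
    sat S (fun t => if u ∈ t then (1 : ℝ) else 0) = 1 ↔ ∃ t ∈ S, u ∈ t := by
  unfold sat
  rw [dif_pos hSne]
  constructor
  · intro h
    by_contra hc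
    push_neg at hc
    have : S.sup' hSne (fun t => if u ∈ t then (1 : ℝ) else 0) ≤ 0 := by
      apply Finset.sup'_le
      intro t ht
      rw [if_neg (hc t ht)]
    rw [h] at this; norm_num at this
  · rintro ⟨t, ht, hu⟩
    have h1 : S.sup' hSne (fun t => if u ∈ t then (1 : ℝ) else 0) ≤ 1 := by
      apply Finset.sup'_le; intro t _; split <;> norm_num
    have h2 : (1 : ℝ) ≤ S.sup' hSne (fun t => if u ∈ t then (1 : ℝ) else 0) := by
      have := Finset.le_sup' (fun t => if u ∈ t then (1 : ℝ) else 0) ht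
      rwa [if_pos hu] at this
    linarith

/-- For the set-cover instance (database `T`, indicator utility functions `f_u`,
uniform weights), a nonempty `S ⊆ T` has average regret ratio `0` if and only
if `S` is a set cover of `U`. -/
theorem arr_eq_zero_iff_setCover {U : Type*} [Fintype U] [DecidableEq U] [Nonempty U]
    (T : Finset (Finset U))
    (hcover : ∀ u : U, ∃ t ∈ T, u ∈ t)
    (S : Finset (Finset U)) (hST : S ⊆ T) (hSne : S.Nonempty) :
    (1 / (Fintype.card U : ℝ)) *
        ∑ u : U, (1 - sat S (fun t => if u ∈ t then (1 : ℝ) else 0)) = 0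
      ↔ ∀ u : U, ∃ t ∈ S, u ∈ t := by
  have hcard : (Fintype.card U : ℝ) ≠ 0 := by
    exact_mod_cast Fintype.card_ne_zero
  rw [mul_eq_zero, or_iff_right (by simp [hcard])]
  rw [Finset.sum_eq_zero_iff_of_nonneg (fun u _ => by
    have := sat_indicator_le_one S u; linarith)]
  constructor
  · intro h u
    have := h u (Finset.mem_univ u)
    rw [← sat_indicator_eq_one_iff S hSne u]
    linarith
  · intro h u _
    have := (sat_indicator_eq_one_iff S hSne u).2 (h u)
    linarith
end

section
/- Let U be a nonempty finite set and T a finite collection of subsets of U such that every element of U belongs to at least one member of T, and let k be a positive integer with k ≤ |T|. With the database D = T, utility functions f_u(t) = 1 if u ∈ t else 0 for each u ∈ U, uniform weights, and arr(S) = (1/|U|)·Σ_{u ∈ U} (1 − max_{t ∈ S} f_u(t)): there exists a subfamily S ⊆ T with |S| = k whose union is U (a set cover of size k) if and only if there exists S ⊆ T with |S| = k and arr(S) = 0. -/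
open Finset

lemma sat_indicator {U : Type*} [DecidableEq U] (S : Finset (Finset U)) (hS : S.Nonempty)
    (u : U) :
    sat S (fun t => if u ∈ t then (1 : ℝ) else 0)
      = if (∃ t ∈ S, u ∈ t) then (1 : ℝ) else 0 := by
  unfold sat
  rw [dif_pos hS]
  by_cases h : ∃ t ∈ S, u ∈ t
  · rw [if_pos h]
    obtain ⟨t, ht, hut⟩ := h
    apply le_antisymm
    · apply Finset.sup'_le
      intro b _
      split_ifs <;> norm_num
    · calc (1 : ℝ) = if u ∈ t then (1:ℝ) else 0 := by rw [if_pos hut]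
        _ ≤ _ := Finset.le_sup' (fun t => if u ∈ t then (1:ℝ) else 0) ht
  · rw [if_neg h]
    push_neg at h
    apply le_antisymm
    · apply Finset.sup'_le
      intro b hb
      rw [if_neg (h b hb)]
    · obtain ⟨t, ht⟩ := hS
      calc (0 : ℝ) = if u ∈ t then (1:ℝ) else 0 := by rw [if_neg (h t ht)]
        _ ≤ _ := Finset.le_sup' (fun t => if u ∈ t then (1:ℝ) else 0) ht

/-- For the set-cover instance (database `T`, indicator utility functions `f_u`,
uniform weights), there is a set cover of size `k` inside `T` if and only if
there is a size-`k` subfamily of `T` with average regret ratio `0`. -/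
theorem setCover_iff_arr_eq_zero {U : Type*} [Fintype U] [DecidableEq U] [Nonempty U]
    (T : Finset (Finset U))
    (hcover : ∀ u : U, ∃ t ∈ T, u ∈ t)
    (k : ℕ) (hk0 : 0 < k) (hk : k ≤ T.card) :
    (∃ S ⊆ T, S.card = k ∧ ∀ u : U, ∃ t ∈ S, u ∈ t)
      ↔ (∃ S ⊆ T, S.card = k ∧
          (1 / (Fintype.card U : ℝ)) *
            ∑ u : U, (1 - sat S (fun t => if u ∈ t then (1 : ℝ) else 0)) = 0) := by
  have hU : (0 : ℝ) < (Fintype.card U : ℝ) := by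
    exact_mod_cast Fintype.card_pos
  constructor
  · rintro ⟨S, hST, hSk, hScov⟩
    refine ⟨S, hST, hSk, ?_⟩
    have hS : S.Nonempty := Finset.card_pos.mp (hSk ▸ hk0)
    have : ∀ u : U, (1 : ℝ) - sat S (fun t => if u ∈ t then (1:ℝ) else 0) = 0 := by
      intro u
      rw [sat_indicator S hS u, if_pos (hScov u)]
      ring
    rw [Finset.sum_congr rfl (fun u _ => this u), Finset.sum_const, smul_zero, mul_zero]
  · rintro ⟨S, hST, hSk, hsum⟩
    refine ⟨S, hST, hSk, ?_⟩
    have hS : S.Nonempty := Finset.card_pos.mp (hSk ▸ hk0)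
    have hsum0 : ∑ u : U, ((1:ℝ) - sat S (fun t => if u ∈ t then (1:ℝ) else 0)) = 0 := by
      have := mul_eq_zero.mp hsum
      rcases this with h | h
      · exfalso
        have : (1 : ℝ) / (Fintype.card U : ℝ) ≠ 0 := by positivity
        exact this h
      · exact h
    have hnn : ∀ u ∈ Finset.univ (α := U),
        (0:ℝ) ≤ 1 - sat S (fun t => if u ∈ t then (1:ℝ) else 0) := by
      intro u _
      rw [sat_indicator S hS u]
      split_ifs <;> norm_num
    intro u
    by_contra h
    have hterm := (Finset.sum_eq_zero_iff_of_nonneg hnn).mp hsum0 u (Finset.mem_univ u)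
    rw [sat_indicator S hS u, if_neg h] at hterm
    norm_num at hterm
end
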